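/- arXiv:1301.0031 — 5 statements merged into one kernel-verified Lean document; each statement's English description precedes it below -/
import Mathlib

section
/- Let A and A' be categories, T an endofunctor of A which is an equivalence (autofunctor), T' an endofunctor of A' which is an equivalence (autofunctor), and F : A ⥤ A', G : A' ⥤ A functors with an adjunction F ⊣ G having unit ε : 𝟭_A ⟶ F ⋙ G and counit η : G ⋙ F ⟶ 𝟭_{A'}. Let α : T ⋙ F ⟶ F ⋙ T' be a natural transformation, and let β : G ⋙ T ⟶ T' ⋙ G be the composite (whiskering of ε) : G ⋙ T ⟶ G ⋙ T ⋙ F ⋙ G, followed by (G-α-G whiskering) : G ⋙ T ⋙ F ⋙ G ⟶ G ⋙ F ⋙ T' ⋙ G, followed by (whiskering of η) : G ⋙ F ⋙ T' ⋙ G ⟶ T' ⋙ G. If β is a natural isomorphism, then α is a natural isomorphism. -/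
open CategoryTheory Functor

/-! The composite `β` is exactly the mate of `α` with respect to the adjunction `F ⊣ G` on both
sides. Since `T` and `T'` are equivalences they have right adjoints `T⁻¹`, `T'⁻¹`, and taking
mates once more, now along `T ⊣ T⁻¹` and `T' ⊣ T'⁻¹` (whose unit and counit are isomorphisms),
turns `β` into an isomorphism which is the conjugate of `α` with respect to the composite
adjunctions `T ⋙ F ⊣ G ⋙ T⁻¹` and `F ⋙ T' ⊣ T'⁻¹ ⋙ G`. Conjugation reflects isomorphisms. -/

section Mates

variable {C D E E' : Type*} [Category C] [Category D] [Category E] [Category E']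
  {G : C ⥤ E} {H : D ⥤ E'} {L₁ : C ⥤ D} {R₁ : D ⥤ C} {L₂ : E ⥤ E'} {R₂ : E' ⥤ E}

theorem mateEquiv_natTrans_eq (adj₁ : L₁ ⊣ R₁) (adj₂ : L₂ ⊣ R₂) (α : G ⋙ L₂ ⟶ L₁ ⋙ H) :
    (mateEquiv adj₁ adj₂ α).natTrans = whiskerLeft (R₁ ⋙ G) adj₂.unit ≫
      whiskerLeft R₁ (whiskerRight α R₂) ≫ whiskerRight adj₁.counit (H ⋙ R₂) := by
  ext
  simp [mateEquiv]

theorem isIso_mateEquiv_natTrans (adj₁ : L₁ ⊣ R₁) (adj₂ : L₂ ⊣ R₂) [IsIso adj₁.counit]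
    [IsIso adj₂.unit] (α : G ⋙ L₂ ⟶ L₁ ⋙ H) [IsIso α] :
    IsIso (mateEquiv adj₁ adj₂ α).natTrans := by
  rw [mateEquiv_natTrans_eq]
  infer_instance

theorem isIso_of_isIso_mateEquiv_natTrans [G.IsEquivalence] [H.IsEquivalence]
    (adj₁ : L₁ ⊣ R₁) (adj₂ : L₂ ⊣ R₂) (α : G ⋙ L₂ ⟶ L₁ ⋙ H)
    [IsIso (mateEquiv adj₁ adj₂ α).natTrans] : IsIso α := by
  let adjG : G ⊣ G.inv := G.asEquivalence.toAdjunction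
  let adjH : H ⊣ H.inv := H.asEquivalence.toAdjunction
  have : IsIso adjG.unit := inferInstanceAs (IsIso G.asEquivalence.unitIso.hom)
  have : IsIso adjH.counit := inferInstanceAs (IsIso H.asEquivalence.counitIso.hom)
  have : IsIso (conjugateEquiv (adj₁.comp adjH) (adjG.comp adj₂) α) := by
    rw [← iterated_mateEquiv_conjugateEquiv adj₁ adj₂ adjG adjH α]
    exact isIso_mateEquiv_natTrans adjH adjG _
  exact conjugateEquiv_of_iso (adj₁.comp adjH) (adjG.comp adj₂) α

end Mates

/-- Lemma `LemAdPrep.(3°)`: given an adjunction `F ⊣ G` with unit `ε` and counit `η`,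
autofunctors (equivalences) `T` of `A` and `T'` of `A'`, a natural transformation
`α : T ⋙ F ⟶ F ⋙ T'`, and `β : G ⋙ T ⟶ T' ⋙ G` defined as the composite
`G ⋙ T ⟶ G ⋙ T ⋙ F ⋙ G ⟶ G ⋙ F ⋙ T' ⋙ G ⟶ T' ⋙ G`:
if `β` is a natural isomorphism, then so is `α`. -/
theorem stmt_4 {A : Type*} [Category A] {A' : Type*} [Category A']
    (T : A ⥤ A) (T' : A' ⥤ A') [T.IsEquivalence] [T'.IsEquivalence]
    (F : A ⥤ A') (G : A' ⥤ A)
    (adj : F ⊣ G) (α : T ⋙ F ⟶ F ⋙ T')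
    (β : G ⋙ T ⟶ T' ⋙ G)
    (hβ : β = Functor.whiskerLeft (G ⋙ T) adj.unit ≫
      Functor.whiskerLeft G (Functor.whiskerRight α G) ≫ Functor.whiskerRight adj.counit (T' ⋙ G))
    (hβiso : IsIso β) :
    IsIso α := by
  rw [hβ, ← mateEquiv_natTrans_eq] at hβiso
  exact isIso_of_isIso_mateEquiv_natTrans adj adj α
end

section
/- Let C be a category and M a multiplicative system in C, with localization functor L : C ⥤ C_M. Then for morphisms s : X' ⟶ X and t : Y' ⟶ Y belonging to M and any morphism f : X' ⟶ Y' of C, the composite (L s)⁻¹ ≫ L f ≫ (L t)⁻¹ : L X ⟶ L Y is an isomorphism in C_M if and only if f belongs to M. In particular, for any morphism f of C, L f is an isomorphism if and only if f ∈ M. -/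
open CategoryTheory

/-- A multiplicative system in the sense of Definition `DefAppMult` (Fr1–Fr4). -/
structure IsMultiplicativeSystem {C : Type*} [Category C] (M : MorphismProperty C) : Prop where
  fr1 : ∀ X : C, M (𝟙 X)
  fr2 : ∀ ⦃X Y Z W : C⦄ (f : X ⟶ Y) (g : Y ⟶ Z) (h : Z ⟶ W),
    M (f ≫ g) → M (g ≫ h) → M f ∧ M g ∧ M h ∧ M (f ≫ g ≫ h)
  fr3 : ∀ ⦃X Y : C⦄ (f g : X ⟶ Y),
    (∃ (X' : C) (s : X' ⟶ X), M s ∧ s ≫ f = s ≫ g) ↔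
    (∃ (Y' : C) (t : Y ⟶ Y'), M t ∧ f ≫ t = g ≫ t)
  fr4 : ∀ ⦃X Y X' : C⦄ (s : X ⟶ Y) (f : X ⟶ X'), M s →
    ∃ (Y' : C) (s' : X' ⟶ Y') (f' : Y ⟶ Y'), M s' ∧ s ≫ f' = f ≫ s'
  fr4' : ∀ ⦃Y Y' X' : C⦄ (f' : Y ⟶ Y') (s' : X' ⟶ Y'), M s' →
    ∃ (X : C) (s : X ⟶ Y) (f : X ⟶ X'), M s ∧ s ≫ f' = f ≫ s'

/-!
Fr4 and Fr3 give `M` a left calculus of fractions, so every morphism of `C_M` is a left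
fraction `L a ≫ (L u)⁻¹`. If `L f` is invertible, writing its inverse this way and using Fr3
again produces `a` with `f ≫ a ∈ M`; then `L a` is invertible too, so likewise `a ≫ b ∈ M` for
some `b`, and Fr2 applied to `f, a, b` yields `f ∈ M`.
-/

namespace CategoryTheory.MorphismProperty

variable {C D : Type*} [Category C] [Category D] (L : C ⥤ D) (W : MorphismProperty C)
  [L.IsLocalization W] [W.HasLeftCalculusOfFractions]

lemma exists_comp_mem_of_isIso_map {X Y : C} (f : X ⟶ Y) [IsIso (L.map f)] :
    ∃ (Z : C) (a : Y ⟶ Z), W (f ≫ a) := by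
  obtain ⟨φ, hφ⟩ := Localization.exists_leftFraction L W (inv (L.map f))
  have hmap : L.map (f ≫ φ.f) = L.map φ.s := by
    rw [L.map_comp, ← φ.map_comp_map_s L (Localization.inverts L W), ← hφ, IsIso.hom_inv_id_assoc]
  obtain ⟨Z, u, hu, fac⟩ := (map_eq_iff_postcomp L W _ _).mp hmap
  exact ⟨Z, φ.f ≫ u, by rw [← Category.assoc, fac]; exact W.comp_mem _ _ φ.hs hu⟩

end CategoryTheory.MorphismProperty

namespace IsMultiplicativeSystem

variable {C : Type*} [Category C] {M : MorphismProperty C}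

lemma comp_mem (hM : IsMultiplicativeSystem M) {X Y Z : C} {f : X ⟶ Y} {g : Y ⟶ Z}
    (hf : M f) (hg : M g) : M (f ≫ g) := by
  simpa using (hM.fr2 f (𝟙 Y) g (by simpa using hf) (by simpa using hg)).2.2.2

lemma isMultiplicative (hM : IsMultiplicativeSystem M) : M.IsMultiplicative where
  id_mem := hM.fr1
  comp_mem _ _ hf hg := hM.comp_mem hf hg

lemma hasLeftCalculusOfFractions (hM : IsMultiplicativeSystem M) :
    M.HasLeftCalculusOfFractions :=
  have := hM.isMultiplicative
  { exists_leftFraction := fun _ _ φ => by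
      obtain ⟨_, s', f', hs', fac⟩ := hM.fr4 φ.s φ.f φ.hs
      exact ⟨MorphismProperty.LeftFraction.mk f' s' hs', fac.symm⟩
    ext := fun X' _ _ f₁ f₂ s hs h => by
      obtain ⟨Y', t, ht, fac⟩ := (hM.fr3 f₁ f₂).mp ⟨X', s, hs, h⟩
      exact ⟨Y', t, ht, fac⟩ }

variable {D : Type*} [Category D] (L : C ⥤ D) [L.IsLocalization M]

lemma mem_of_isIso_map (hM : IsMultiplicativeSystem M) {X Y : C} (f : X ⟶ Y)
    [IsIso (L.map f)] : M f := by
  have := hM.hasLeftCalculusOfFractions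
  obtain ⟨_, a, hfa⟩ := M.exists_comp_mem_of_isIso_map L f
  have : IsIso (L.map (f ≫ a)) := Localization.inverts L M _ hfa
  have : IsIso (L.map a) := by
    rw [L.map_comp] at this
    exact IsIso.of_isIso_comp_left (L.map f) (L.map a)
  obtain ⟨_, b, hab⟩ := M.exists_comp_mem_of_isIso_map L a
  exact (hM.fr2 f a b hfa hab).1

lemma isIso_map_iff (hM : IsMultiplicativeSystem M) {X Y : C} (f : X ⟶ Y) :
    IsIso (L.map f) ↔ M f :=
  ⟨fun _ => hM.mem_of_isIso_map L f, Localization.inverts L M f⟩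

end IsMultiplicativeSystem

/-- Remark `RemA0`: for a multiplicative system `M` in `C` with localisation functor
`L = M.Q : C ⥤ C_M`, given `s : X' ⟶ X` and `t : Y ⟶ Y'` in `M` and `f : X' ⟶ Y'`,
the double fraction `(L s)⁻¹ ≫ L f ≫ (L t)⁻¹ : L X ⟶ L Y` is an isomorphism if and
only if `f ∈ M`; in particular `L f` is an isomorphism if and only if `f ∈ M`. -/
theorem stmt_11 {C : Type*} [Category C] (M : MorphismProperty C)
    (hM : IsMultiplicativeSystem M) :
    (∀ ⦃X' X Y' Y : C⦄ (s : X' ⟶ X) (t : Y ⟶ Y') (f : X' ⟶ Y')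
      (hs : M s) (ht : M t),
      have : IsIso (M.Q.map s) := Localization.inverts M.Q M s hs
      have : IsIso (M.Q.map t) := Localization.inverts M.Q M t ht
      (IsIso (inv (M.Q.map s) ≫ M.Q.map f ≫ inv (M.Q.map t)) ↔ M f)) ∧
    (∀ ⦃X Y : C⦄ (f : X ⟶ Y), IsIso (M.Q.map f) ↔ M f) := by
  refine ⟨fun _ _ _ _ s t f hs ht => ?_, fun _ _ => hM.isIso_map_iff M.Q⟩
  have : IsIso (M.Q.map s) := Localization.inverts M.Q M s hs
  have : IsIso (M.Q.map t) := Localization.inverts M.Q M t ht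
  simpa only [isIso_comp_left_iff, isIso_comp_right_iff] using hM.isIso_map_iff M.Q f
end

section
/- Let C be a category and M a multiplicative system in C, with localization functor L : C ⥤ C_M. Then for parallel morphisms f, g : X ⟶ Y in C, the following are equivalent: (i) L f = L g in C_M; (ii) there exists t : Y ⟶ Y' in M such that f ≫ t = g ≫ t in C; (iii) there exists s : X' ⟶ X in M such that s ≫ f = s ≫ g in C. -/
open CategoryTheory

/-!
Axioms (Fr1)–(Fr4) say that `M` admits both a left and a right calculus of fractions: (Fr4)
provides the Ore conditions and (Fr3) the cancellation conditions. The description of equality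
in the localization by a calculus of fractions then gives (ii) from the left calculus and (iii)
from the right one.
-/

namespace IsMultiplicativeSystem

variable {C : Type*} [Category C] {M : MorphismProperty C}

lemma hasRightCalculusOfFractions (hM : IsMultiplicativeSystem M) :
    M.HasRightCalculusOfFractions :=
  have := hM.isMultiplicative
  { exists_rightFraction := fun _ _ φ => by
      obtain ⟨_, s, f, hs, fac⟩ := hM.fr4' φ.f φ.s φ.hs
      exact ⟨MorphismProperty.RightFraction.mk s hs f, fac⟩
    ext := fun _ _ Y' f₁ f₂ s hs fac => by
      obtain ⟨X', t, ht, fac'⟩ := (hM.fr3 f₁ f₂).2 ⟨Y', s, hs, fac⟩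
      exact ⟨X', t, ht, fac'⟩ }

end IsMultiplicativeSystem

/-- Remark `RemA0_1`: for a multiplicative system `M` in `C` with localisation functor
`L = M.Q : C ⥤ C_M` and parallel morphisms `f, g : X ⟶ Y` in `C`, the following are
equivalent: (i) `L f = L g`; (ii) there is `t : Y ⟶ Y'` in `M` with `f ≫ t = g ≫ t`;
(iii) there is `s : X' ⟶ X` in `M` with `s ≫ f = s ≫ g`. -/
theorem stmt_12 {C : Type*} [Category C] (M : MorphismProperty C)
    (hM : IsMultiplicativeSystem M) {X Y : C} (f g : X ⟶ Y) :
    (M.Q.map f = M.Q.map g ↔ ∃ (Y' : C) (t : Y ⟶ Y'), M t ∧ f ≫ t = g ≫ t) ∧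
    (M.Q.map f = M.Q.map g ↔ ∃ (X' : C) (s : X' ⟶ X), M s ∧ s ≫ f = s ≫ g) := by
  have := hM.isMultiplicative
  have := hM.hasLeftCalculusOfFractions
  have := hM.hasRightCalculusOfFractions
  exact ⟨by simpa only [exists_prop] using MorphismProperty.map_eq_iff_postcomp M.Q M f g,
    by simpa only [exists_prop] using MorphismProperty.map_eq_iff_precomp M.Q M f g⟩
end

section
/- Let C be a category and M a multiplicative system in C, with localization functor L : C ⥤ C_M. For every n ≥ 0, the induced functor on diagram categories, from the category of diagrams in C indexed by the linearly ordered poset {1 < 2 < ⋯ < n} to the category of diagrams in C_M indexed by the same poset (given by postcomposition with L), is 1-epimorphic: for every category D, precomposition with this induced functor gives a fully faithful functor from the category of functors (diagrams in C_M indexed by {1<⋯<n}) ⥤ D to the category of functors (diagrams in C indexed by {1<⋯<n}) ⥤ D. -/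
/-!
Write `Φ : (Fin n ⥤ C) ⥤ (Fin n ⥤ C_M)` for postcomposition with `L`. Conditions (Fr1)–(Fr4)
imply that `M` admits a calculus of right fractions. Then `Φ` is essentially surjective, and every
morphism `u : Φ F ⟶ Φ F'` is a right fraction `(Φ s)⁻¹ ≫ Φ g` with `s : F'' ⟶ F` objectwise
in `M`. The latter is built by induction on `n`: a fraction for the restriction of `u` to
`{2 < ⋯ < n}` is extended to the first object using the Ore condition and the fact that
morphisms identified by `L` are equalized by precomposition with a morphism of `M`.

For any essentially surjective functor `Φ` all of whose morphisms between objects of its image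
are right fractions, precomposition with `Φ` is fully faithful: a transformation
`τ : Φ ⋙ H₁ ⟶ Φ ⋙ H₂` is natural with respect to `(Φ s)⁻¹ ≫ Φ g` because it is natural with
respect to `s` and `g`, so it descends to `H₁ ⟶ H₂`.
-/

open CategoryTheory

lemma IsMultiplicativeSystem.hasRightCalculusOfFractions_s14 {C : Type*} [Category C]
    {M : MorphismProperty C} (hM : IsMultiplicativeSystem M) :
    M.HasRightCalculusOfFractions where
  id_mem := hM.fr1
  comp_mem f g hf hg := by
    simpa using (hM.fr2 f (𝟙 _) g (by simpa using hf) (by simpa using hg)).2.2.2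
  exists_rightFraction _ _ φ := by
    obtain ⟨_, s, f, hs, fac⟩ := hM.fr4' φ.f φ.s φ.hs
    exact ⟨MorphismProperty.RightFraction.mk s hs f, fac⟩
  ext _ _ Y' f₁ f₂ s hs h := by
    obtain ⟨X', t, ht, fac⟩ := (hM.fr3 f₁ f₂).2 ⟨Y', s, hs, h⟩
    exact ⟨X', t, ht, fac⟩

namespace CategoryTheory

namespace Functor

variable {A B D : Type*} [Category A] [Category B] [Category D]

def HasRightFractions (G : A ⥤ B) : Prop :=
  ∀ ⦃X Y : A⦄ (u : G.obj X ⟶ G.obj Y),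
    ∃ (X' : A) (s : X' ⟶ X) (g : X' ⟶ Y), IsIso (G.map s) ∧ G.map s ≫ u = G.map g

lemma naturality_of_map_comp_eq {G : A ⥤ B} {H₁ H₂ : B ⥤ D} (τ : G ⋙ H₁ ⟶ G ⋙ H₂)
    {X Y X' : A} (u : G.obj X ⟶ G.obj Y) (s : X' ⟶ X) (g : X' ⟶ Y) [IsIso (G.map s)]
    (h : G.map s ≫ u = G.map g) :
    H₁.map u ≫ τ.app Y = τ.app X ≫ H₂.map u := by
  rw [← cancel_epi (H₁.map (G.map s))]
  calc H₁.map (G.map s) ≫ H₁.map u ≫ τ.app Y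
      = (G ⋙ H₁).map g ≫ τ.app Y := by simp [← h]
    _ = τ.app X' ≫ (G ⋙ H₂).map s ≫ H₂.map u := by rw [τ.naturality]; simp [← h]
    _ = H₁.map (G.map s) ≫ τ.app X ≫ H₂.map u := by
        rw [← Category.assoc, ← τ.naturality]; simp

lemma HasRightFractions.naturality {G : A ⥤ B} (hG : G.HasRightFractions) {H₁ H₂ : B ⥤ D}
    (τ : G ⋙ H₁ ⟶ G ⋙ H₂) {X Y : A} (u : G.obj X ⟶ G.obj Y) :
    H₁.map u ≫ τ.app Y = τ.app X ≫ H₂.map u := by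
  obtain ⟨X', s, g, _, h⟩ := hG u
  exact naturality_of_map_comp_eq τ u s g h

lemma faithful_whiskeringLeft_obj_of_essSurj (G : A ⥤ B) [G.EssSurj] :
    ((whiskeringLeft A B D).obj G).Faithful where
  map_injective {H₁ H₂} α β h := by
    ext X
    rw [← cancel_epi (H₁.map (G.objObjPreimageIso X).hom), α.naturality, β.naturality]
    exact congrArg (fun γ : G ⋙ H₁ ⟶ G ⋙ H₂ => γ.app (G.objPreimage X) ≫ _) h

lemma full_whiskeringLeft_obj_of_hasRightFractions {G : A ⥤ B} [G.EssSurj]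
    (hG : G.HasRightFractions) : ((whiskeringLeft A B D).obj G).Full where
  map_surjective {H₁ H₂} τ := by
    let e := G.objObjPreimageIso
    refine ⟨{ app X := H₁.map (e X).inv ≫ τ.app (G.objPreimage X) ≫ H₂.map (e X).hom
              naturality X Y v := ?_ }, ?_⟩
    · rw [← cancel_epi (H₁.map (e X).hom)]
      have := hG.naturality τ ((e X).hom ≫ v ≫ (e Y).inv)
      simp only [Functor.map_comp, Category.assoc] at this ⊢
      simp [reassoc_of% this]
    · ext X
      have := hG.naturality τ (e (G.obj X)).hom
      simp [← this]

lemma essSurj_of_isEmpty {J C E : Type*} [Category J] [Category C] [Category E] [IsEmpty J]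
    (G : (J ⥤ C) ⥤ (J ⥤ E)) : G.EssSurj where
  mem_essImage _ := ⟨functorOfIsEmpty J C, ⟨isEmptyExt _ _⟩⟩

lemma hasRightFractions_of_isEmpty {J C E : Type*} [Category J] [Category C] [Category E]
    [IsEmpty J] (G : (J ⥤ C) ⥤ (J ⥤ E)) : G.HasRightFractions :=
  fun X Y _ => ⟨X, 𝟙 X, (isEmptyExt X Y).hom, by rw [G.map_id]; infer_instance,
    NatTrans.ext (funext isEmptyElim)⟩

end Functor

namespace Localization

variable {C E : Type*} [Category C] [Category E]

section

variable (L : C ⥤ E) (W : MorphismProperty C) [L.IsLocalization W] [W.HasRightCalculusOfFractions]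

/-- The Ore condition provides `w ≫ f = k ≫ s`; the equation `k ≫ g = c ≫ f'` then only holds
after applying `L`, and is made to hold in `C` by precomposing with a morphism of `W`. -/
lemma exists_rightFraction_square {A B A' B' B'' : C} {f : A ⟶ B} {f' : A' ⟶ B'}
    {u₀ : L.obj A ⟶ L.obj A'} {u₁ : L.obj B ⟶ L.obj B'}
    (hu : u₀ ≫ L.map f' = L.map f ≫ u₁)
    {s : B'' ⟶ B} (hs : W s) {g : B'' ⟶ B'} (hsg : L.map s ≫ u₁ = L.map g) :
    ∃ (A'' : C) (w : A'' ⟶ A) (k : A'' ⟶ B'') (c : A'' ⟶ A'),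
      W w ∧ w ≫ f = k ≫ s ∧ k ≫ g = c ≫ f' ∧ L.map w ≫ u₀ = L.map c := by
  obtain ⟨ψ, hψ⟩ := (MorphismProperty.LeftFraction.mk f s hs).exists_rightFraction
  obtain ⟨φ, hφ⟩ := exists_rightFraction L W (L.map ψ.s ≫ u₀)
  have hφ' : L.map φ.s ≫ L.map ψ.s ≫ u₀ = L.map φ.f := by
    rw [hφ]; exact φ.map_s_comp_map L (inverts L W)
  have : L.map (φ.f ≫ f') = L.map (φ.s ≫ ψ.f ≫ g) := by
    simp only [Functor.map_comp, ← hφ', Category.assoc, hu, ← hsg]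
    simp only [← Functor.map_comp_assoc, hψ]
  obtain ⟨A'', r, hr, hr'⟩ := (MorphismProperty.map_eq_iff_precomp L W _ _).1 this
  refine ⟨A'', r ≫ φ.s ≫ ψ.s, r ≫ φ.s ≫ ψ.f, r ≫ φ.f,
    W.comp_mem _ _ hr (W.comp_mem _ _ φ.hs ψ.hs), ?_, ?_, ?_⟩
  · simp [hψ]
  · simpa using hr'.symm
  · simp [hφ']

open ComposableArrows in
lemma exists_rightFraction_mapComposableArrows (m : ℕ) {F F' : ComposableArrows C m}
    (u : (L.mapComposableArrows m).obj F ⟶ (L.mapComposableArrows m).obj F') :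
    ∃ (F'' : ComposableArrows C m) (s : F'' ⟶ F) (g : F'' ⟶ F'),
      W.functorCategory _ s ∧ (L.mapComposableArrows m).map s ≫ u =
        (L.mapComposableArrows m).map g := by
  induction m with
  | zero =>
    obtain ⟨φ, hφ⟩ := exists_rightFraction L W (u.app 0)
    refine ⟨mk₀ φ.X', homMk₀ φ.s, homMk₀ φ.f, fun i => ?_, ?_⟩
    · fin_cases i; exact φ.hs
    · ext
      change L.map φ.s ≫ u.app 0 = L.map φ.f
      rw [hφ]
      exact φ.map_s_comp_map L (inverts L W)
  | succ m ih =>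
    obtain ⟨F, A, f, rfl⟩ := precomp_surjective F
    obtain ⟨F', A', f', rfl⟩ := precomp_surjective F'
    obtain ⟨F'', s, g, hs, hsg⟩ := ih (δ₀Functor.map u)
    have hsg₀ : L.map (s.app 0) ≫ u.app 1 = L.map (g.app 0) := NatTrans.congr_app hsg 0
    obtain ⟨A'', w, k, c, hw, hwk, hkc, hwc⟩ := exists_rightFraction_square L W
      (u.naturality (homOfLE (Fin.zero_le 1))).symm (hs 0) hsg₀
    refine ⟨F''.precomp k, homMkSucc w s hwk.symm, homMkSucc c g hkc,
      Fin.cases hw hs, ?_⟩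
    ext i
    induction i using Fin.cases with
    | zero => exact hwc
    | succ j => exact NatTrans.congr_app hsg j

end

lemma essSurj_whiskeringRight_obj (L : C ⥤ E) (W : MorphismProperty C) [L.IsLocalization W]
    [W.HasRightCalculusOfFractions] (n : ℕ) :
    ((Functor.whiskeringRight (Fin n) C E).obj L).EssSurj := by
  cases n with
  | zero => exact Functor.essSurj_of_isEmpty _
  | succ m => exact essSurj_mapComposableArrows_of_hasRightCalculusOfFractions L W m

lemma hasRightFractions_whiskeringRight_obj (L : C ⥤ E) (W : MorphismProperty C)
    [L.IsLocalization W] [W.HasRightCalculusOfFractions] (n : ℕ) :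
    ((Functor.whiskeringRight (Fin n) C E).obj L).HasRightFractions := by
  cases n with
  | zero => exact Functor.hasRightFractions_of_isEmpty _
  | succ m =>
    intro F F' u
    obtain ⟨F'', s, g, hs, hsg⟩ := exists_rightFraction_mapComposableArrows L W m u
    exact ⟨F'', s, g, (NatTrans.isIso_iff_isIso_app _).2 fun i => inverts L W _ (hs i), hsg⟩

end Localization

end CategoryTheory

/-- Lemma `LemA1`: for a multiplicative system `M` in `C` with localisation functor
`L = M.Q : C ⥤ C_M`, for every `n ≥ 0` the induced functor on diagram categories
indexed by the linear poset with `n` elements (postcomposition with `L`) is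
1-epimorphic: for every category `D`, precomposition with it is fully faithful. -/
theorem stmt_14 {C : Type*} [Category C] (M : MorphismProperty C)
    (hM : IsMultiplicativeSystem M) (n : ℕ)
    (D : Type*) [Category D] :
    ((Functor.whiskeringLeft (Fin n ⥤ C) (Fin n ⥤ M.Localization) D).obj
        ((Functor.whiskeringRight (Fin n) C M.Localization).obj M.Q)).Full ∧
    ((Functor.whiskeringLeft (Fin n ⥤ C) (Fin n ⥤ M.Localization) D).obj
        ((Functor.whiskeringRight (Fin n) C M.Localization).obj M.Q)).Faithful := by
  have := hM.hasRightCalculusOfFractions_s14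
  have := Localization.essSurj_whiskeringRight_obj M.Q M n
  exact ⟨Functor.full_whiskeringLeft_obj_of_hasRightFractions
      (Localization.hasRightFractions_whiskeringRight_obj M.Q M n),
    Functor.faithful_whiskeringLeft_obj_of_essSurj _⟩
end

section
/- Let C be an additive category, M a multiplicative system in C with localization functor L : C ⥤ C_M, and let T be an additive category. Then precomposition with L induces an equivalence from the category of additive functors C_M ⥤ T (with natural transformations as morphisms) to the category of those additive functors C ⥤ T which send every morphism of M to an isomorphism (with natural transformations as morphisms); moreover this equivalence is strictly dense, i.e. surjective on objects, full and faithful. -/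
open CategoryTheory CategoryTheory.Limits

variable {C : Type*} [Category C] (M : MorphismProperty C) [Preadditive C]
  {T : Type*} [Category T] [Preadditive T]
  [Preadditive M.Localization] [M.Q.Additive]

/-- The functor given by precomposition with the localisation functor `M.Q`, from
additive functors `C_M ⥤+ T` to the full subcategory of those additive functors
`C ⥤+ T` which send every morphism of `M` to an isomorphism. -/
noncomputable def precompQ :
    (M.Localization ⥤+ T) ⥤
      ObjectProperty.FullSubcategory (fun F : C ⥤+ T => M.IsInvertedBy F.obj) where
  obj G :=
    ⟨⟨M.Q ⋙ G.obj, by have : G.obj.Additive := G.property; exact (inferInstance : (M.Q ⋙ G.obj).Additive)⟩,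
      fun X Y f hf => by
        have : IsIso (M.Q.map f) := Localization.inverts M.Q M f hf
        dsimp
        infer_instance⟩
  map {G G'} φ := ObjectProperty.homMk (ObjectProperty.homMk (Functor.whiskerLeft M.Q φ.hom))
/-! Functors out of Mathlib's localization `M.Localization` correspond strictly to functors out
of `C` inverting `M`, via `Localization.Construction.lift`, and natural transformations are
determined by and extend from their components at objects of `C`. The remaining point is
that a lift `G` is additive as soon as `M.Q ⋙ G` is; this holds because Fr1–Fr4 give a left
calculus of fractions, under which every morphism of `M.Localization` is a fraction and the
addition there is computed on representatives. -/

lemma IsMultiplicativeSystem.hasLeftCalculusOfFractions_s17 {C : Type*} [Category C]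
    {M : MorphismProperty C} (hM : IsMultiplicativeSystem M) :
    M.HasLeftCalculusOfFractions where
  id_mem := hM.fr1
  comp_mem {_ Y _} f g hf hg := by
    simpa using (hM.fr2 f (𝟙 Y) g (by simpa using hf) (by simpa using hg)).2.2.2
  exists_leftFraction _ _ φ := by
    obtain ⟨_, s', f', hs', fac⟩ := hM.fr4 φ.s φ.f φ.hs
    exact ⟨⟨f', s', hs'⟩, fac.symm⟩
  ext _ _ _ f₁ f₂ s hs h := by
    obtain ⟨_, t, ht, fac⟩ := (hM.fr3 f₁ f₂).1 ⟨_, s, hs, h⟩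
    exact ⟨_, t, ht, fac⟩

instance precompQ_faithful : (precompQ M (T := T)).Faithful where
  map_injective {_ _} φ ψ h := by
    ext : 1
    exact Localization.natTrans_ext M.Q M fun X =>
      congr_app (congrArg (fun f => f.hom.hom) h) X

instance precompQ_full : (precompQ M (T := T)).Full where
  map_surjective {_ _} τ :=
    ⟨ObjectProperty.homMk (Localization.Construction.natTransExtension τ.hom.hom), by
      ext X
      exact Localization.Construction.NatTransExtension.app_eq τ.hom.hom X⟩

lemma precompQ_obj_surjective [M.HasLeftCalculusOfFractions] :
    Function.Surjective (precompQ M (T := T)).obj := by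
  rintro ⟨⟨F, hF⟩, hInv⟩
  have fac : M.Q ⋙ Localization.Construction.lift F hInv = F :=
    Localization.Construction.fac F hInv
  have : (Localization.Construction.lift F hInv).Additive := by
    rwa [Localization.functor_additive_iff M.Q M, fac]
  exact ⟨⟨_, this⟩, by ext : 1; exact ObjectProperty.FullSubcategory.ext fac⟩

lemma precompQ_isEquivalence [M.HasLeftCalculusOfFractions] :
    (precompQ M (T := T)).IsEquivalence :=
  have := Functor.essSurj_of_surj (precompQ_obj_surjective M (T := T))
  { }

theorem stmt_17
    (hM : IsMultiplicativeSystem M) :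
    (precompQ M (T := T)).IsEquivalence ∧
    (precompQ M (T := T)).Full ∧ (precompQ M (T := T)).Faithful ∧
    Function.Surjective (precompQ M (T := T)).obj := by
  have := hM.hasLeftCalculusOfFractions_s17
  exact ⟨precompQ_isEquivalence M, inferInstance, inferInstance, precompQ_obj_surjective M⟩
end
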